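/- The two definitions of a Construction D' lattice are equivalent: the set of x ∈ Z^n satisfying the congruences h_j·x ≡ 0 (mod 2^{i+1}) for all i ∈ {0,...,a-1} and k_i+1 ≤ j ≤ n, equals the set of x ∈ R^n with D·H̃·x ∈ Z^n, where h_1,...,h_n are the rows of the unimodular binary-entried integer matrix H̃ and D is the diagonal matrix with d_{j,j} = 2^{-i} for k_{i-1} < j ≤ k_i (k_{-1}=0, k_a=n). -/
import Mathlib


/-- Equivalence of the congruences definition and the check-matrix definition of
Construction D' lattices. `Ht` is a unimodular integer matrix with 0/1 entries whose
rows `k i + 1, ..., n` are the parity checks of the nested code `C i`;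
`f j` is the level of row `j` (so that the diagonal of `D` is `2 ^ (-(f j))`). -/
theorem constructionDprime_definitions_equivalent
    (n a : ℕ) (ha : 1 ≤ a)
    (Ht : Matrix (Fin n) (Fin n) ℤ)
    (h01 : ∀ i j, Ht i j = 0 ∨ Ht i j = 1)
    (hU : Ht.det = 1 ∨ Ht.det = -1)
    (k : ℕ → ℕ) (hk0 : 0 < k 0) (hkmono : ∀ i < a, k i < k (i + 1)) (hka : k a = n)
    (f : Fin n → ℕ)
    (hf0 : ∀ j : Fin n, j.val < k 0 → f j = 0)
    (hfs : ∀ j : Fin n, ∀ i : ℕ, i + 1 ≤ a → k i ≤ j.val → j.val < k (i + 1) → f j = i + 1) :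
    {x : Fin n → ℝ | (∀ l, ∃ m : ℤ, x l = (m : ℝ)) ∧
        ∀ i < a, ∀ j : Fin n, k i ≤ j.val →
          ∃ m : ℤ, ∑ l, (Ht j l : ℝ) * x l = (m : ℝ) * 2 ^ (i + 1)} =
      {x : Fin n → ℝ | ∀ j, ∃ m : ℤ,
        ((Matrix.diagonal fun j : Fin n => ((2 : ℝ) ^ (f j))⁻¹) *
          Ht.map (Int.cast : ℤ → ℝ)).mulVec x j = (m : ℝ)} := by
  -- monotonicity of k
  have kmono : ∀ d i, i + d ≤ a → k i ≤ k (i + d) := by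
    intro d
    induction d with
    | zero => intro i _; simp
    | succ b ih =>
      intro i h
      have h1 : k i ≤ k (i + b) := ih i (by omega)
      have h2 : k (i + b) < k (i + b + 1) := hkmono (i + b) (by omega)
      have h3 : i + (b + 1) = i + b + 1 := by omega
      rw [h3]
      omega
  -- location lemma
  have loc : ∀ j : ℕ, ∀ b, b ≤ a → j < k b →
      j < k 0 ∨ ∃ i, i < a ∧ k i ≤ j ∧ j < k (i + 1) := by
    intro j b
    induction b with
    | zero => intro _ h; exact Or.inl h
    | succ b ih =>
      intro hba hj
      rcases Nat.lt_or_ge j (k b) with h | h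
      · exact ih (by omega) h
      · exact Or.inr ⟨b, by omega, h, hj⟩
  -- the diagonal product formula
  have hD : ∀ x : Fin n → ℝ, ∀ j : Fin n,
      ((Matrix.diagonal fun j : Fin n => ((2 : ℝ) ^ (f j))⁻¹) *
        Ht.map (Int.cast : ℤ → ℝ)).mulVec x j
      = ((2 : ℝ) ^ (f j))⁻¹ * ∑ l, (Ht j l : ℝ) * x l := by
    intro x j
    rw [← Matrix.mulVec_mulVec, Matrix.mulVec_diagonal]
    simp [Matrix.mulVec, dotProduct, Matrix.map_apply]
  ext x
  simp only [Set.mem_setOf_eq]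
  constructor
  · rintro ⟨hint, hcong⟩ j
    rcases loc j.val a le_rfl (hka ▸ j.isLt) with hj0 | ⟨i, hia, hki, hki1⟩
    · choose m hm using hint
      refine ⟨∑ l, Ht j l * m l, ?_⟩
      rw [hD, hf0 j hj0]
      push_cast
      simp [hm]
    · have hfj := hfs j i hia hki hki1
      obtain ⟨m, hm⟩ := hcong i hia j hki
      refine ⟨m, ?_⟩
      rw [hD, hfj, hm]
      have : (2 : ℝ) ^ (i + 1) ≠ 0 := by positivity
      field_simp
  · intro h
    choose m hm using h
    have hy : ∀ j, (∑ l, (Ht j l : ℝ) * x l) = (m j : ℝ) * 2 ^ (f j) := by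
      intro j
      have h1 := hm j
      rw [hD] at h1
      have h2 : (2 : ℝ) ^ (f j) ≠ 0 := by positivity
      field_simp at h1
      linarith [h1]
    -- integrality of x via the integer inverse of Ht
    have hdet : IsUnit Ht.det := by
      rcases hU with h' | h' <;> rw [h']
      · exact isUnit_one
      · exact isUnit_one.neg
    have hinv : Invertible Ht := Ht.invertibleOfIsUnitDet hdet
    set B : Matrix (Fin n) (Fin n) ℤ := ⅟Ht with hB
    have hBHt : B * Ht = 1 := invOf_mul_self Ht
    have hreal : (B.map (Int.cast : ℤ → ℝ)) * (Ht.map (Int.cast : ℤ → ℝ)) = 1 := by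
      have h2 : (Int.castRingHom ℝ).mapMatrix B * (Int.castRingHom ℝ).mapMatrix Ht = 1 := by
        rw [← map_mul, hBHt, map_one]
      simpa [RingHom.mapMatrix_apply, Int.coe_castRingHom] using h2
    have hx : ∀ l, x l = ∑ j, (B l j : ℝ) * ((m j : ℝ) * 2 ^ (f j)) := by
      intro l
      have h1 : (B.map (Int.cast : ℤ → ℝ)).mulVec
          ((Ht.map (Int.cast : ℤ → ℝ)).mulVec x) l = x l := by
        rw [Matrix.mulVec_mulVec, hreal, Matrix.one_mulVec]
      rw [← h1]
      simp only [Matrix.mulVec, dotProduct, Matrix.map_apply]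
      congr 1
      ext j
      congr 1
      rw [← hy j]
    have hxint : ∀ l, ∃ mm : ℤ, x l = (mm : ℝ) := by
      intro l
      refine ⟨∑ j, B l j * (m j * 2 ^ (f j)), ?_⟩
      rw [hx l]
      push_cast
      ring
    refine ⟨hxint, ?_⟩
    intro i hia j hkij
    have hjlt : j.val < k a := hka ▸ j.isLt
    rcases loc j.val a le_rfl hjlt with hj0 | ⟨i', hi'a, hki', hki'1⟩
    · exfalso
      have : k 0 ≤ k i := by
        have := kmono i 0 (by omega)
        simpa using this
      omega
    · have hfj := hfs j i' hi'a hki' hki'1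
      -- i ≤ i'
      have hii' : i ≤ i' := by
        by_contra hcon
        push_neg at hcon
        have : k (i' + 1) ≤ k i := by
          have := kmono (i - (i' + 1)) (i' + 1) (by omega)
          have heq : i' + 1 + (i - (i' + 1)) = i := by omega
          rwa [heq] at this
        omega
      refine ⟨m j * 2 ^ (i' - i), ?_⟩
      rw [hy j, hfj]
      push_cast
      rw [mul_assoc, ← pow_add]
      congr 2
      omega
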